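/- arXiv:1703.00411 — 4 statements merged into one kernel-verified Lean document; each statement's English description precedes it below -/
import Mathlib

section
/- Let Γ be an additive commutative group and Z : Γ → ℂ an additive group homomorphism. Fix θ ∈ ℝ and α ∈ [0, π/2), and let S = S(θ,α) = {z ∈ ℂ | z ≠ 0 and Re(exp(−iθ)·z) ≥ cos(α)·|z|} be the closed sector of direction θ and half-angle α. Set Γ_S = {γ ∈ Γ | Z(γ) ∈ S}, and assume that for every λ > 0 the set {γ ∈ Γ_S | |Z(γ)| < λ} is finite. Then for every λ > 0 the set {γ ∈ M | |Z(γ)| < λ} is finite, where M is the additive submonoid of Γ generated by Γ_S. -/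
/-!
Rotating by `exp (-iθ)` and taking real parts gives an additive functional `φ = Re (exp (-iθ) Z)`
with `cos α ‖Z γ‖ ≤ φ γ ≤ ‖Z γ‖` on the sector classes. If `γ` in the monoid has `‖Z γ‖ < λ`, it
is a sum of sector classes each of `φ`-value less than `λ`, so each lies in the finite set `F` of
sector classes with `‖Z‖ < λ / cos α`; as `φ` is bounded below on `F` by some `m > 0`, there are at
most `λ / m` summands, leaving finitely many possible sums.
-/

theorem Set.Finite.exists_pos_forall_le {α : Type*} {F : Set α} (hF : F.Finite) {f : α → ℝ}
    (hf : ∀ x ∈ F, 0 < f x) : ∃ m > 0, ∀ x ∈ F, m ≤ f x := by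
  rcases F.eq_empty_or_nonempty with rfl | hne
  · exact ⟨1, one_pos, by simp⟩
  · obtain ⟨a, ha, hmin⟩ := Set.exists_min_image F f hF hne
    exact ⟨f a, hf a ha, hmin⟩

namespace AddMonoidHom

variable {M : Type*} [AddMonoid M] (φ : M →+ ℝ)

theorem le_map_sum_of_mem {L : List M} (hL : ∀ x ∈ L, 0 ≤ φ x) {y : M} (hy : y ∈ L) :
    φ y ≤ φ L.sum := by
  rw [map_list_sum]
  exact List.single_le_sum (by simpa using hL) _ (List.mem_map_of_mem hy)

theorem length_mul_le_map_sum {L : List M} {m : ℝ} (hL : ∀ x ∈ L, m ≤ φ x) :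
    L.length * m ≤ φ L.sum := by
  rw [map_list_sum, ← List.length_map φ, ← nsmul_eq_mul]
  exact List.card_nsmul_le_sum _ _ (by simpa using hL)

theorem setOf_mem_closure_lt_subset_image_sum {s : Set M} (hpos : ∀ x ∈ s, 0 < φ x) {c m : ℝ}
    (hm : 0 < m) (hmF : ∀ x ∈ {x ∈ s | φ x < c}, m ≤ φ x) :
    {x ∈ (AddSubmonoid.closure s : Set M) | φ x < c} ⊆
      (fun l : List {x ∈ s | φ x < c} => (l.map (↑)).sum) '' {l | l.length ≤ ⌈c / m⌉₊} := by
  rintro x ⟨hx, hxc⟩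
  obtain ⟨L, hLs, rfl⟩ := AddSubmonoid.exists_list_of_mem_closure hx
  have hLF : ∀ y ∈ L, y ∈ {x ∈ s | φ x < c} := fun y hy =>
    ⟨hLs y hy, (φ.le_map_sum_of_mem (fun z hz => (hpos z (hLs z hz)).le) hy).trans_lt hxc⟩
  have hlen : (L.length : ℝ) ≤ c / m := by
    rw [le_div_iff₀ hm]
    exact ((φ.length_mul_le_map_sum fun y hy => hmF y (hLF y hy)).trans_lt hxc).le
  lift L to List {x ∈ s | φ x < c} using hLF
  exact ⟨L, by simpa using (Nat.cast_le (α := ℝ)).mp (hlen.trans (Nat.le_ceil _)), rfl⟩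

theorem finite_setOf_mem_closure_lt {s : Set M} (hpos : ∀ x ∈ s, 0 < φ x) {c : ℝ}
    (hfin : {x ∈ s | φ x < c}.Finite) :
    {x ∈ (AddSubmonoid.closure s : Set M) | φ x < c}.Finite := by
  obtain ⟨m, hm, hmF⟩ := hfin.exists_pos_forall_le fun x hx => hpos x hx.1
  have : Finite {x ∈ s | φ x < c} := hfin.to_subtype
  exact ((List.finite_length_le _ _).image _).subset
    (φ.setOf_mem_closure_lt_subset_image_sum hpos hm hmF)

end AddMonoidHom

theorem Complex.re_exp_neg_mul_I_mul_le_norm (θ : ℝ) (z : ℂ) :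
    (Complex.exp (-(θ : ℂ) * Complex.I) * z).re ≤ ‖z‖ :=
  (Complex.re_le_norm _).trans_eq <| by simp [Complex.norm_exp]

/-- Part (1) of Lemma 2.2: if the set of classes whose central charge lies in a closed
sector `S` of half-angle `< π/2` has finitely many elements of central charge modulus `< λ`
for every `λ > 0`, then the same holds for the submonoid generated by those classes. -/
theorem sector_monoid_ball_finite
    {Γ : Type*} [AddCommGroup Γ] (Z : Γ →+ ℂ) (θ α : ℝ)
    (hα : α ∈ Set.Ico 0 (Real.pi / 2))
    (S : Set ℂ)
    (hS : S = {z : ℂ | z ≠ 0 ∧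
      Real.cos α * ‖z‖ ≤ (Complex.exp (-(θ : ℂ) * Complex.I) * z).re})
    (ΓS : Set Γ) (hΓS : ΓS = {γ : Γ | Z γ ∈ S})
    (hfin : ∀ lam : ℝ, 0 < lam → {γ ∈ ΓS | ‖Z γ‖ < lam}.Finite) :
    ∀ lam : ℝ, 0 < lam →
      {γ ∈ (AddSubmonoid.closure ΓS : Set Γ) | ‖Z γ‖ < lam}.Finite := by
  intro lam hlam
  have hcos : 0 < Real.cos α :=
    Real.cos_pos_of_mem_Ioo ⟨by linarith [hα.1, Real.pi_pos], hα.2⟩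
  let φ : Γ →+ ℝ :=
    Complex.reAddGroupHom.comp
      ((AddMonoidHom.mulLeft (Complex.exp (-(θ : ℂ) * Complex.I))).comp Z)
  have hφ_le : ∀ γ, φ γ ≤ ‖Z γ‖ := fun γ => Complex.re_exp_neg_mul_I_mul_le_norm θ (Z γ)
  have hφ_sector : ∀ γ ∈ ΓS, Z γ ≠ 0 ∧ Real.cos α * ‖Z γ‖ ≤ φ γ := by
    subst hΓS hS
    exact fun γ hγ => hγ
  have hpos : ∀ γ ∈ ΓS, 0 < φ γ := fun γ hγ =>
    (mul_pos hcos (norm_pos_iff.mpr (hφ_sector γ hγ).1)).trans_le (hφ_sector γ hγ).2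
  have hfinφ : {γ ∈ ΓS | φ γ < lam}.Finite :=
    (hfin _ (div_pos hlam hcos)).subset fun γ ⟨hγ, hγlam⟩ =>
      ⟨hγ, by rw [lt_div_iff₀' hcos]; exact (hφ_sector γ hγ).2.trans_lt hγlam⟩
  exact (φ.finite_setOf_mem_closure_lt hpos hfinφ).subset fun γ ⟨hγ, hγlam⟩ =>
    ⟨hγ, (hφ_le γ).trans_lt hγlam⟩
end

section
/- Let Γ be a finitely generated free ℤ-module and ⟨·,·⟩ : Γ × Γ → ℤ a ℤ-bilinear alternating form (⟨γ,γ⟩ = 0 for all γ ∈ Γ). Then there exists a quadratic refinement of ⟨·,·⟩, i.e. a function c : Γ → ℤ taking values in {1, −1} such that c(γ₁ + γ₂) = (−1)^{⟨γ₁,γ₂⟩} · c(γ₁) · c(γ₂) for all γ₁, γ₂ ∈ Γ. -/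
private lemma neg_one_cast_ite (m : ℤ) :
    ((if Even m then (1:ℤ) else -1 : ℤ) : ℚ) = (-1:ℚ) ^ m := by
  by_cases h : Even m
  · simp [h, h.neg_one_zpow]
  · rw [Int.not_even_iff_odd] at h
    simp [Int.not_even_iff_odd.2 h, h.neg_one_zpow]

/-- Existence of a quadratic refinement: for any ℤ-bilinear alternating form `B` on a
finitely generated free ℤ-module `Γ`, there is `c : Γ → ℤ` with values in `{±1}` such that
`c(γ₁+γ₂) = (-1)^{B γ₁ γ₂} · c γ₁ · c γ₂`. -/
theorem exists_quadratic_refinement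
    {Γ : Type*} [AddCommGroup Γ] [Module ℤ Γ] [Module.Free ℤ Γ] [Module.Finite ℤ Γ]
    (B : Γ →ₗ[ℤ] Γ →ₗ[ℤ] ℤ) (halt : ∀ γ : Γ, B γ γ = 0) :
    ∃ c : Γ → ℤ, (∀ γ : Γ, c γ = 1 ∨ c γ = -1) ∧
      ∀ γ₁ γ₂ : Γ, (c (γ₁ + γ₂) : ℚ) = (-1 : ℚ) ^ (B γ₁ γ₂) * (c γ₁ : ℚ) * (c γ₂ : ℚ) := by
  classical
  let b := Module.finBasis ℤ Γ
  let M : Fin (Module.finrank ℤ Γ) → Fin (Module.finrank ℤ Γ) → ℤ :=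
    fun i j => if i < j then B (b i) (b j) else 0
  let β : Γ →ₗ[ℤ] Γ →ₗ[ℤ] ℤ := b.constr ℤ (fun i => b.constr ℤ (M i))
  have hβb : ∀ i j, β (b i) (b j) = M i j := by
    intro i j
    simp [β, Module.Basis.constr_basis]
  have hanti : ∀ x y : Γ, B x y = - B y x := by
    intro x y
    have h := halt (x + y)
    simp only [map_add, LinearMap.add_apply, halt] at h
    linarith
  -- the bilinear form B + β + βᵀ is even-valued
  have hD : ∀ x y : Γ, Even (B x y + β x y + β y x) := by
    let π : ℤ →ₗ[ℤ] ZMod 2 := (Int.castAddHom (ZMod 2)).toIntLinearMap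
    let D : Γ →ₗ[ℤ] Γ →ₗ[ℤ] ℤ := B + β + β.flip
    have hD2 : D.compr₂ π = 0 := by
      apply b.ext; intro i
      apply b.ext; intro j
      have : ((B (b i) (b j) + M i j + M j i : ℤ) : ZMod 2) = 0 := by
        rcases lt_trichotomy i j with h | h | h
        · have : ¬ j < i := not_lt.2 h.le
          simp only [M, if_pos h, if_neg this]
          rw [ZMod.intCast_zmod_eq_zero_iff_dvd]
          exact ⟨B (b i) (b j), by ring⟩
        · subst h
          simp [M, halt]
        · have : ¬ i < j := not_lt.2 h.le
          simp only [M, if_neg this, if_pos h]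
          rw [ZMod.intCast_zmod_eq_zero_iff_dvd]
          rw [hanti (b i) (b j)]
          exact ⟨0, by ring⟩
      simpa [D, π, LinearMap.compr₂_apply, LinearMap.add_apply, LinearMap.flip_apply,
        hβb] using this
    intro x y
    have h0 : ((B x y + β x y + β y x : ℤ) : ZMod 2) = 0 := by
      have h := congrArg (fun f => f x) hD2
      have h' := congrArg (fun g => g y) h
      simpa [D, π, LinearMap.compr₂_apply, LinearMap.add_apply, LinearMap.flip_apply] using h'
    rw [ZMod.intCast_zmod_eq_zero_iff_dvd] at h0
    obtain ⟨c, hc⟩ := h0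
    exact ⟨c, by omega⟩
  refine ⟨fun γ => if Even (β γ γ) then 1 else -1, fun γ => by dsimp only; split <;> simp, ?_⟩
  intro x y
  rw [neg_one_cast_ite, neg_one_cast_ite, neg_one_cast_ite]
  obtain ⟨k, hk⟩ := hD x y
  have hexp : β (x + y) (x + y) = B x y + β x x + β y y + 2 * (k - B x y) := by
    have : β (x + y) (x + y) = β x x + β x y + β y x + β y y := by
      simp only [map_add, LinearMap.add_apply]; ring
    rw [this]; omega
  have hne : (-1 : ℚ) ≠ 0 := by norm_num
  rw [hexp, zpow_add₀ hne, zpow_add₀ hne, zpow_add₀ hne]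
  have h2 : (-1 : ℚ) ^ (2 * (k - B x y)) = 1 := by
    rw [zpow_mul]; norm_num
  rw [h2]; ring
end

section
/- Let a ≤ b be real numbers, Z : ℂ → ℂ and φ : ℝ → ℂ. Assume that for every t ∈ [a,b]: Z is complex-differentiable at φ(t); φ has derivative 2 · Z(φ(t)) · conj(deriv Z (φ(t))) at t (i.e. φ is a trajectory of the gradient flow of |Z|²); and Z(φ(t)) ≠ 0. Then the phase of Z is constant along φ: for all t ∈ [a,b], |Z(φ(a))| · Z(φ(t)) = |Z(φ(t))| · Z(φ(a)). -/
/-!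
Write `g = Z ∘ φ`. By the chain rule and the flow equation,
`g' = Z'(φ) · 2 Z(φ) conj Z'(φ) = 2 |Z'(φ)|² · g`, a *real* multiple of `g`. A curve whose
velocity is a real multiple of its position only moves radially: `‖g‖' = 2 |Z'(φ)|² ‖g‖`, hence
`(g / ‖g‖)' = 0` and the phase `g / ‖g‖` is constant on `[a, b]`.
-/

open Set

section InnerProductSpace

variable {F : Type*} [NormedAddCommGroup F] [InnerProductSpace ℝ F] {f : ℝ → F}

theorem HasDerivAt.norm_of_eq_smul {x c : ℝ} (hf : HasDerivAt f (c • f x) x) (h0 : f x ≠ 0) :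
    HasDerivAt (‖f ·‖) (c * ‖f x‖) x := by
  have hpos : 0 < ‖f x‖ := norm_pos_iff.mpr h0
  refine ((hf.norm_sq.sqrt (by positivity)).congr_of_eventuallyEq
    (.of_forall fun y => (Real.sqrt_sq (norm_nonneg (f y))).symm)).congr_deriv ?_
  rw [real_inner_smul_right, real_inner_self_eq_norm_sq, Real.sqrt_sq hpos.le]
  field_simp

theorem HasDerivAt.inv_norm_smul_of_eq_smul {x c : ℝ} (hf : HasDerivAt f (c • f x) x)
    (h0 : f x ≠ 0) : HasDerivAt (fun y => ‖f y‖⁻¹ • f y) 0 x := by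
  have hx : ‖f x‖ ≠ 0 := norm_ne_zero_iff.mpr h0
  refine (((hf.norm_of_eq_smul h0).inv hx).smul hf).congr_deriv ?_
  rw [Pi.inv_apply, smul_smul, ← add_smul,
    show ‖f x‖⁻¹ * c + -(c * ‖f x‖) / ‖f x‖ ^ 2 = 0 by field_simp; ring, zero_smul]

theorem inv_norm_smul_eq_of_hasDerivAt_eq_smul {a b : ℝ} {c : ℝ → ℝ}
    (hf : ∀ t ∈ Icc a b, HasDerivAt f (c t • f t) t) (h0 : ∀ t ∈ Icc a b, f t ≠ 0) :
    ∀ t ∈ Icc a b, ‖f t‖⁻¹ • f t = ‖f a‖⁻¹ • f a := by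
  have hderiv t (ht : t ∈ Icc a b) := (hf t ht).inv_norm_smul_of_eq_smul (h0 t ht)
  exact constant_of_has_deriv_right_zero
    (fun t ht => (hderiv t ht).continuousAt.continuousWithinAt)
    (fun t ht => (hderiv t (Ico_subset_Icc_self ht)).hasDerivWithinAt)

end InnerProductSpace

theorem norm_smul_eq_of_inv_norm_smul_eq {E : Type*} [NormedAddCommGroup E] [NormedSpace ℝ E]
    {x y : E} (hx : x ≠ 0) (hy : y ≠ 0) (h : ‖x‖⁻¹ • x = ‖y‖⁻¹ • y) : ‖y‖ • x = ‖x‖ • y := by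
  have := congrArg ((‖x‖ * ‖y‖) • ·) h
  simp only [smul_smul] at this
  rwa [mul_inv_cancel_right₀ (norm_ne_zero_iff.mpr hy), mul_comm ‖x‖,
    mul_inv_cancel_right₀ (norm_ne_zero_iff.mpr hx)] at this

theorem hasDerivAt_comp_of_gradientFlow_normSq {Z : ℂ → ℂ} {φ : ℝ → ℂ} {t : ℝ}
    (hZ : DifferentiableAt ℂ Z (φ t))
    (hφ : HasDerivAt φ (2 * Z (φ t) * (starRingEnd ℂ) (deriv Z (φ t))) t) :
    HasDerivAt (fun s => Z (φ s)) ((2 * ‖deriv Z (φ t)‖ ^ 2) • Z (φ t)) t := by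
  refine (hZ.hasDerivAt.comp t hφ).congr_deriv ?_
  rw [Complex.real_smul]
  push_cast
  rw [← Complex.mul_conj']
  ring

theorem phase_constant_along_gradient_flow_general
    (a b : ℝ) (Z : ℂ → ℂ) (φ : ℝ → ℂ)
    (hZ : ∀ t ∈ Set.Icc a b, DifferentiableAt ℂ Z (φ t))
    (hφ : ∀ t ∈ Set.Icc a b,
      HasDerivAt φ (2 * Z (φ t) * (starRingEnd ℂ) (deriv Z (φ t))) t)
    (hne : ∀ t ∈ Set.Icc a b, Z (φ t) ≠ 0) :
    ∀ t ∈ Set.Icc a b,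
      (‖Z (φ a)‖ : ℂ) * Z (φ t) = (‖Z (φ t)‖ : ℂ) * Z (φ a) := by
  intro t ht
  have ha : a ∈ Icc a b := ⟨le_rfl, ht.1.trans ht.2⟩
  have hphase := inv_norm_smul_eq_of_hasDerivAt_eq_smul
    (fun s hs => hasDerivAt_comp_of_gradientFlow_normSq (hZ s hs) (hφ s hs)) hne t ht
  simpa only [Complex.real_smul] using
    norm_smul_eq_of_inv_norm_smul_eq (hne t ht) (hne a ha) hphase

/-- Along a trajectory of the gradient flow `φ' = 2·Z(φ)·conj(Z'(φ))` of `|Z|²`, the phase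
of `Z` is constant: `|Z(φ a)|·Z(φ t) = |Z(φ t)|·Z(φ a)` for all `t ∈ [a,b]`. -/
theorem phase_constant_along_gradient_flow
    (a b : ℝ) (hab : a ≤ b) (Z : ℂ → ℂ) (φ : ℝ → ℂ)
    (hZ : ∀ t ∈ Set.Icc a b, DifferentiableAt ℂ Z (φ t))
    (hφ : ∀ t ∈ Set.Icc a b,
      HasDerivAt φ (2 * Z (φ t) * (starRingEnd ℂ) (deriv Z (φ t))) t)
    (hne : ∀ t ∈ Set.Icc a b, Z (φ t) ≠ 0) :
    ∀ t ∈ Set.Icc a b,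
      (‖Z (φ a)‖ : ℂ) * Z (φ t) = (‖Z (φ t)‖ : ℂ) * Z (φ a) :=
  phase_constant_along_gradient_flow_general a b Z φ hZ hφ hne
end

section
/- Let a < b, t₀ ∈ (a,b), Z : ℂ → ℂ and ψ : ℝ → ℂ. Assume: ψ is differentiable at t₀; Z is complex-differentiable at ψ(t) and Z(ψ(t)) ≠ 0 for every t ∈ [a,b]; Z∘ψ is differentiable at t₀; deriv Z (ψ(t₀)) ≠ 0; and the phase of Z is constant along ψ, i.e. |Z(ψ(a))| · Z(ψ(t)) = |Z(ψ(t))| · Z(ψ(a)) for all t ∈ [a,b]. Then the velocity of ψ at t₀ points in the gradient direction of |Z|²: there exists s ∈ ℝ with deriv ψ t₀ = s · ( Z(ψ(t₀)) · conj(deriv Z (ψ(t₀))) ). -/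
/-!
Write `u` for the phase of `Z (ψ a)`. Constancy of the phase says `Z (ψ t) = ‖Z (ψ t)‖ • u` on
`[a, b]`, a neighbourhood of `t₀`, so the velocity of `Z ∘ ψ` at `t₀` is a real multiple of `u`,
hence of `Z (ψ t₀)`. By the chain rule this velocity is `Z' (ψ t₀) · ψ' t₀`, and dividing by
`Z' (ψ t₀) ≠ 0`, i.e. multiplying by `conj (Z' (ψ t₀)) / ‖Z' (ψ t₀)‖²`, gives the claim.
-/

open Filter Topology Set ComplexConjugate

theorem eq_norm_smul_of_norm_smul_eq {E : Type*} [NormedAddCommGroup E] [NormedSpace ℝ E]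
    {w w₀ : E} (hw₀ : w₀ ≠ 0) (h : ‖w₀‖ • w = ‖w‖ • w₀) : w = ‖w‖ • (‖w₀‖⁻¹ • w₀) := by
  rw [smul_comm, ← h, smul_smul, inv_mul_cancel₀ (norm_ne_zero_iff.2 hw₀), one_smul]

theorem exists_deriv_eq_smul_of_eventuallyEq_norm_smul {E : Type*} [NormedAddCommGroup E]
    [InnerProductSpace ℝ E] {f : ℝ → E} {t₀ : ℝ} (u : E) (hf : DifferentiableAt ℝ f t₀)
    (h0 : f t₀ ≠ 0) (hphase : f =ᶠ[𝓝 t₀] fun t => ‖f t‖ • u) :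
    ∃ s : ℝ, deriv f t₀ = s • f t₀ := by
  set r' := deriv (fun t => ‖f t‖) t₀
  have hr : HasDerivAt (fun t => ‖f t‖) r' t₀ := (hf.norm ℝ h0).hasDerivAt
  refine ⟨r' / ‖f t₀‖, ?_⟩
  calc deriv f t₀ = r' • u := by rw [hphase.deriv_eq, (hr.smul_const u).deriv]
    _ = (r' / ‖f t₀‖) • (‖f t₀‖ • u) := by
      rw [smul_smul, div_mul_cancel₀ _ (norm_ne_zero_iff.2 h0)]
    _ = (r' / ‖f t₀‖) • f t₀ := by rw [← hphase.eq_of_nhds]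

theorem Complex.exists_eq_ofReal_mul_mul_conj_of_mul_eq {z v w : ℂ} {s : ℝ} (hz : z ≠ 0)
    (h : z * v = s * w) : ∃ s' : ℝ, v = s' * (w * conj z) := by
  refine ⟨s / ‖z‖ ^ 2, ?_⟩
  have hnorm : (‖z‖ : ℂ) ≠ 0 := by exact_mod_cast norm_ne_zero_iff.2 hz
  have hconj := Complex.mul_conj' z
  push_cast
  field_simp
  linear_combination conj z * h - v * hconj

theorem velocity_in_gradient_direction_of_constant_phase_general
    (a b t₀ : ℝ) (ht₀ : t₀ ∈ Set.Ioo a b)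
    (Z : ℂ → ℂ) (ψ : ℝ → ℂ)
    (hψ : DifferentiableAt ℝ ψ t₀)
    (hZ : ∀ t ∈ Set.Icc a b, DifferentiableAt ℂ Z (ψ t))
    (hne : ∀ t ∈ Set.Icc a b, Z (ψ t) ≠ 0)
    (hd : deriv Z (ψ t₀) ≠ 0)
    (hphase : ∀ t ∈ Set.Icc a b,
      ((‖Z (ψ a)‖ : ℝ) : ℂ) * Z (ψ t) = ((‖Z (ψ t)‖ : ℝ) : ℂ) * Z (ψ a)) :
    ∃ s : ℝ, deriv ψ t₀ = (s : ℂ) * (Z (ψ t₀) * (starRingEnd ℂ) (deriv Z (ψ t₀))) := by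
  have ha : a ∈ Icc a b := ⟨le_rfl, (ht₀.1.trans ht₀.2).le⟩
  have ht : t₀ ∈ Icc a b := Ioo_subset_Icc_self ht₀
  have hcomp : HasDerivAt (Z ∘ ψ) (deriv Z (ψ t₀) * deriv ψ t₀) t₀ :=
    (hZ t₀ ht).hasDerivAt.comp t₀ hψ.hasDerivAt
  have hphase_near : Z ∘ ψ =ᶠ[𝓝 t₀] fun t => ‖(Z ∘ ψ) t‖ • (‖Z (ψ a)‖⁻¹ • Z (ψ a)) :=
    eventually_of_mem (Icc_mem_nhds ht₀.1 ht₀.2) fun t h =>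
      eq_norm_smul_of_norm_smul_eq (hne a ha) (by simpa only [Function.comp_apply, Complex.real_smul] using hphase t h)
  obtain ⟨s, hs⟩ := exists_deriv_eq_smul_of_eventuallyEq_norm_smul _ hcomp.differentiableAt
    (hne t₀ ht) hphase_near
  rw [hcomp.deriv, Complex.real_smul] at hs
  exact Complex.exists_eq_ofReal_mul_mul_conj_of_mul_eq hd hs

/-- Converse direction of Lemma on tropical edges: if the phase of `Z` is constant along a
curve `ψ` (with `Z` differentiable and nonvanishing along it, `Z∘ψ` differentiable, and
`Z'(ψ t₀) ≠ 0`), then the velocity of `ψ` at an interior time `t₀` is a real multiple of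
the gradient direction `Z(ψ t₀)·conj(Z'(ψ t₀))` of `|Z|²`. -/
theorem velocity_in_gradient_direction_of_constant_phase
    (a b t₀ : ℝ) (hab : a < b) (ht₀ : t₀ ∈ Set.Ioo a b)
    (Z : ℂ → ℂ) (ψ : ℝ → ℂ)
    (hψ : DifferentiableAt ℝ ψ t₀)
    (hZ : ∀ t ∈ Set.Icc a b, DifferentiableAt ℂ Z (ψ t))
    (hne : ∀ t ∈ Set.Icc a b, Z (ψ t) ≠ 0)
    (hZψ : DifferentiableAt ℝ (Z ∘ ψ) t₀)
    (hd : deriv Z (ψ t₀) ≠ 0)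
    (hphase : ∀ t ∈ Set.Icc a b,
      ((‖Z (ψ a)‖ : ℝ) : ℂ) * Z (ψ t) = ((‖Z (ψ t)‖ : ℝ) : ℂ) * Z (ψ a)) :
    ∃ s : ℝ, deriv ψ t₀ = (s : ℂ) * (Z (ψ t₀) * (starRingEnd ℂ) (deriv Z (ψ t₀))) :=
  velocity_in_gradient_direction_of_constant_phase_general a b t₀ ht₀ Z ψ hψ hZ hne hd hphase
end
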